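/- arXiv:1410.5640 — 2 statements merged into one kernel-verified Lean document; each statement's English description precedes it below -/
import Mathlib

section
/- If a measurable map h : ℝ^m → N is 0-homogeneous at a point y (i.e. h(y+λx)=h(y+x) for all λ>0), is k-homogeneous at y with respect to a k-dimensional subspace V (i.e. additionally h(x+z)=h(x) for all z ∈ V), is also 0-homogeneous at a point z ∉ y + V, then h is (k+1)-homogeneous at y with respect to the (k+1)-dimensional subspace span{z−y, V}. -/
/-!
Write `c = z - y`. For `l > 0`, scaling by `l` about `y` and then by `l⁻¹` about `z` carries
`x` to `x + (1 - l⁻¹) • c` without changing the value of `h`. As `l` ranges over `(0, ∞)`,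
`1 - l⁻¹` ranges over `(-∞, 1)`, so `h` is invariant under every translation along `c`.
Together with the invariance under `V` this gives invariance under `span {c} ⊔ V`, whose
dimension is `k + 1` because `c ∉ V`.
-/

open Function

section

variable {R M N : Type*} [Semiring R] [AddCommMonoid M] [Module R M]

theorem periodic_of_mem_sup {h : M → N} {U W : Submodule R M}
    (hU : ∀ u ∈ U, Periodic h u) (hW : ∀ w ∈ W, Periodic h w) :
    ∀ v ∈ U ⊔ W, Periodic h v := by
  intro v hv
  obtain ⟨u, hu, w, hw, rfl⟩ := Submodule.mem_sup.1 hv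
  exact (hU u hu).add_period (hW w hw)

end

section

variable {E N : Type*} [AddCommGroup E] [Module ℝ E]

def ZeroHomogeneousAt (h : E → N) (y : E) : Prop :=
  ∀ l : ℝ, 0 < l → ∀ x, h (y + l • x) = h (y + x)

namespace ZeroHomogeneousAt

variable {h : E → N} {y z : E}

theorem periodic_one_sub_inv_smul (hy : ZeroHomogeneousAt h y) (hz : ZeroHomogeneousAt h z)
    {l : ℝ} (hl : 0 < l) : Periodic h ((1 - l⁻¹) • (z - y)) := by
  intro x
  calc h (x + (1 - l⁻¹) • (z - y)) = h (z + l⁻¹ • (l • (x - y) - (z - y))) := by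
        congr 1
        rw [smul_sub (l⁻¹), smul_smul, inv_mul_cancel₀ hl.ne', one_smul]
        module
    _ = h (z + (l • (x - y) - (z - y))) := hz _ (inv_pos.2 hl) _
    _ = h (y + l • (x - y)) := by congr 1; abel
    _ = h (y + (x - y)) := hy l hl _
    _ = h x := by rw [add_sub_cancel]

theorem periodic_smul_sub (hy : ZeroHomogeneousAt h y) (hz : ZeroHomogeneousAt h z) (t : ℝ) :
    Periodic h (t • (z - y)) := by
  have nonpos : ∀ s ≤ (0 : ℝ), Periodic h (s • (z - y)) := fun s hs => by
    simpa only [inv_inv, sub_sub_cancel] using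
      hy.periodic_one_sub_inv_smul hz (inv_pos.2 (by linarith : 0 < 1 - s))
  rcases le_total t 0 with ht | ht
  · exact nonpos t ht
  · simpa only [neg_smul, neg_neg] using (nonpos (-t) (by linarith)).neg

end ZeroHomogeneousAt

end

/-- Cone-splitting principle: a map 0-homogeneous at `y`, invariant under a
`k`-dimensional subspace `V`, and 0-homogeneous at `z ∉ y + V`, is
`(k+1)`-homogeneous at `y` with respect to `span{z-y} ⊔ V`. -/
theorem stmt_0 (m k : ℕ) (N : Type*) (h : EuclideanSpace ℝ (Fin m) → N)
    (y z : EuclideanSpace ℝ (Fin m)) (V : Submodule ℝ (EuclideanSpace ℝ (Fin m)))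
    (hV : Module.finrank ℝ V = k)
    (hy0 : ∀ l : ℝ, 0 < l → ∀ x, h (y + l • x) = h (y + x))
    (hVinv : ∀ x, ∀ v ∈ V, h (x + v) = h x)
    (hz0 : ∀ l : ℝ, 0 < l → ∀ x, h (z + l • x) = h (z + x))
    (hzV : z - y ∉ V) :
    Module.finrank ℝ ↥(Submodule.span ℝ {z - y} ⊔ V) = k + 1 ∧
      (∀ l : ℝ, 0 < l → ∀ x, h (y + l • x) = h (y + x)) ∧
      ∀ x, ∀ w ∈ Submodule.span ℝ {z - y} ⊔ V, h (x + w) = h x := by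
  refine ⟨?_, hy0, fun x w hw => periodic_of_mem_sup ?_ (fun v hv x => hVinv x v hv) w hw x⟩
  · rw [sup_comm, Submodule.finrank_sup_span_singleton hzV, hV]
  · intro u hu
    obtain ⟨t, rfl⟩ := Submodule.mem_span_singleton.1 hu
    exact ZeroHomogeneousAt.periodic_smul_sub hy0 hz0 t
end

section
/- Let S ⊆ B_1(0) ⊆ ℝ^m be a finite set, and suppose there exist constants ε-scales in the following sense: there is Q ∈ ℕ such that for every point z ∈ S, the number of integers i ≥ 1 for which the annulus B_{2^{2−i}}(z) \ B_{2^{-i-1}}(z) contains a point of S is at most C(m)·Q. Then |S| ≤ c(m)^{C(m) Q} for a dimensional constant c(m); i.e. the cardinality of S is bounded by a constant depending only on m and Q. -/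
/-!
Induction on `Q`. If `S` has two points, its diameter `d < 2` satisfies `2^{1-i} ≤ d < 2^{2-i}`
for some `i ≥ 1`, and every `z ∈ S` has a point of `S` at distance between `d/2` and `d`, i.e. in
its `i`-th annulus. A maximal `2^{-i-2}`-separated subset of `S` has at most `33^m` points by a
volume count, and the balls of that radius around it cut `S` into pieces of diameter `< 2^{-i-1}`,
in which the scale `i` is no longer occupied. Each piece thus satisfies the hypothesis with `Q - 1`,
so `|S| ≤ 33^m · (33^m)^{Q-1}`.
-/

open Metric MeasureTheory Module
open scoped ENNReal

def occupiedScales {X : Type*} [PseudoMetricSpace X] (S : Finset X) (z : X) : Set ℕ :=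
  {i | 1 ≤ i ∧ ∃ w ∈ S,
    w ∈ ball z ((2 : ℝ) ^ ((2 : ℤ) - (i : ℤ))) \ ball z ((2 : ℝ) ^ (-(i : ℤ) - 1))}

section PseudoMetric

variable {X : Type*} [PseudoMetricSpace X]

theorem finite_setOf_mem_dyadicAnnulus (ρ : ℝ) :
    {i : ℕ | (2 : ℝ) ^ (-(i : ℤ) - 1) ≤ ρ ∧ ρ < (2 : ℝ) ^ ((2 : ℤ) - (i : ℤ))}.Finite := by
  rcases Set.eq_empty_or_nonempty
    {i : ℕ | (2 : ℝ) ^ (-(i : ℤ) - 1) ≤ ρ ∧ ρ < (2 : ℝ) ^ ((2 : ℤ) - (i : ℤ))} with h | ⟨j, hj⟩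
  · exact h ▸ Set.finite_empty
  refine (Set.finite_Iio (j + 3)).subset fun i hi => ?_
  have := (zpow_lt_zpow_iff_right₀ one_lt_two).1 (hj.1.trans_lt hi.2)
  simp only [Set.mem_Iio]
  omega

theorem finite_occupiedScales (S : Finset X) (z : X) : (occupiedScales S z).Finite := by
  refine (S.finite_toSet.biUnion fun w _ => finite_setOf_mem_dyadicAnnulus (dist w z)).subset ?_
  rintro i ⟨-, w, hw, hwz⟩
  simp only [Set.mem_sdiff, mem_ball, not_lt] at hwz
  exact Set.mem_biUnion hw ⟨hwz.2, hwz.1⟩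

theorem occupiedScales_mono {S S' : Finset X} (h : S ⊆ S') (z : X) :
    occupiedScales S z ⊆ occupiedScales S' z := fun _ ⟨hi, w, hw, hwz⟩ => ⟨hi, w, h hw, hwz⟩

theorem notMem_occupiedScales_of_forall_dist_lt {S : Finset X} {z : X} {i : ℕ}
    (h : ∀ w ∈ S, dist w z < (2 : ℝ) ^ (-(i : ℤ) - 1)) : i ∉ occupiedScales S z :=
  fun ⟨_, w, hw, hwz⟩ => hwz.2 (h w hw)

theorem Finset.exists_max_dist {S : Finset X} (h : S.Nonempty) :
    ∃ a ∈ S, ∃ b ∈ S, ∀ x ∈ S, ∀ y ∈ S, dist x y ≤ dist a b := by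
  obtain ⟨p, hp, hmax⟩ := (S ×ˢ S).exists_max_image (fun p => dist p.1 p.2) (h.product h)
  rw [Finset.mem_product] at hp
  exact ⟨p.1, hp.1, p.2, hp.2, fun x hx y hy => hmax (x, y) (Finset.mem_product.2 ⟨hx, hy⟩)⟩

theorem Finset.exists_subset_separated_cover [DecidableEq X] (S : Finset X) {r : ℝ} (hr : 0 < r) :
    ∃ T ⊆ S, (T : Set X).Pairwise (fun x y => r ≤ dist x y) ∧ ∀ z ∈ S, ∃ t ∈ T, dist z t < r := by
  induction S using Finset.induction_on with
  | empty => exact ⟨∅, subset_rfl, by simp, by simp⟩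
  | insert a S _ ih =>
    obtain ⟨T, hTS, hsep, hcov⟩ := ih
    by_cases ha : ∃ t ∈ T, dist a t < r
    · refine ⟨T, hTS.trans (Finset.subset_insert a S), hsep, ?_⟩
      simpa only [Finset.forall_mem_insert] using ⟨ha, hcov⟩
    push Not at ha
    refine ⟨insert a T, Finset.insert_subset_insert a hTS, ?_, ?_⟩
    · rw [Finset.coe_insert, Set.pairwise_insert]
      exact ⟨hsep, fun t ht _ => ⟨ha t ht, dist_comm a t ▸ ha t ht⟩⟩
    · simp only [Finset.forall_mem_insert, Finset.exists_mem_insert, dist_self]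
      exact ⟨Or.inl hr, fun z hz => (hcov z hz).elim fun t ht => Or.inr ⟨t, ht⟩⟩

end PseudoMetric

theorem exists_common_occupiedScale {X : Type*} [MetricSpace X] {S : Finset X}
    (hS : ∀ x ∈ S, ∀ y ∈ S, dist x y < 2) (h : 1 < S.card) :
    ∃ i : ℕ, 1 ≤ i ∧ (∀ x ∈ S, ∀ y ∈ S, dist x y < (2 : ℝ) ^ ((2 : ℤ) - (i : ℤ))) ∧
      ∀ z ∈ S, i ∈ occupiedScales S z := by
  obtain ⟨x₀, hx₀, y₀, hy₀, hne⟩ := Finset.one_lt_card.1 h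
  obtain ⟨a, ha, b, hb, hmax⟩ := Finset.exists_max_dist ⟨x₀, hx₀⟩
  have hd : 0 < dist a b := (dist_pos.2 hne).trans_le (hmax x₀ hx₀ y₀ hy₀)
  obtain ⟨n, hn, hn'⟩ := exists_mem_Ico_zpow hd one_lt_two
  have hn1 : n < 1 := (zpow_lt_zpow_iff_right₀ one_lt_two).1 <| hn.trans_lt <| by
    simpa using hS a ha b hb
  obtain ⟨i, hi⟩ : ∃ i : ℕ, (i : ℤ) = 1 - n := ⟨(1 - n).toNat, Int.toNat_of_nonneg (by omega)⟩
  have hup : (2 : ℝ) ^ ((2 : ℤ) - (i : ℤ)) = 2 ^ (n + 1) := by congr 1; omega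
  have hlow : (2 : ℝ) ^ (-(i : ℤ) - 1) = 2 ^ n / 4 := by
    rw [show -(i : ℤ) - 1 = n - 2 by omega, zpow_sub₀ two_ne_zero]; norm_num
  refine ⟨i, by omega, fun x hx y hy => hup ▸ (hmax x hx y hy).trans_lt hn', fun z hz => ?_⟩
  obtain ⟨w, hw, hzw⟩ : ∃ w ∈ S, dist a b / 2 ≤ dist w z := by
    have := dist_triangle_right a b z
    rcases le_or_gt (dist a b / 2) (dist a z) with h | h
    · exact ⟨a, ha, h⟩
    · exact ⟨b, hb, by linarith⟩
  refine ⟨by omega, w, hw, ?_⟩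
  rw [Set.mem_sdiff, mem_ball, mem_ball, not_lt, hup, hlow]
  exact ⟨(hmax w hw z hz).trans_lt hn', by linarith⟩

section FiniteDimensional

variable {E : Type*} [NormedAddCommGroup E] [NormedSpace ℝ E] [FiniteDimensional ℝ E]

theorem card_le_of_separated_of_subset_closedBall {s : Finset E} {a : E} {R δ : ℝ}
    (hR : 0 ≤ R) (hδ : 0 < δ) (hs : (s : Set E) ⊆ closedBall a R)
    (hsep : (s : Set E).Pairwise fun x y => δ ≤ dist x y) :
    (s.card : ℝ) ≤ ((2 * R + δ) / δ) ^ finrank ℝ E := by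
  borelize E
  set μ : Measure E := Measure.addHaar
  have hδ2 : 0 < δ / 2 := half_pos hδ
  have hdisj : (s : Set E).PairwiseDisjoint fun x => ball x (δ / 2) :=
    fun x hx y hy hxy => ball_disjoint_ball (by linarith [hsep hx hy hxy])
  have hsub : ⋃ x ∈ s, ball x (δ / 2) ⊆ ball a (R + δ / 2) :=
    Set.iUnion₂_subset fun x hx => ball_subset_ball' (by linarith [mem_closedBall.1 (hs hx)])
  have hvol : (s.card : ℝ≥0∞) * ENNReal.ofReal ((δ / 2) ^ finrank ℝ E) * μ (ball 0 1) ≤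
      ENNReal.ofReal ((R + δ / 2) ^ finrank ℝ E) * μ (ball 0 1) :=
    calc (s.card : ℝ≥0∞) * ENNReal.ofReal ((δ / 2) ^ finrank ℝ E) * μ (ball 0 1)
        = μ (⋃ x ∈ s, ball x (δ / 2)) := by
          rw [measure_biUnion_finset hdisj fun x _ => measurableSet_ball]
          simp only [μ.addHaar_ball_of_pos _ hδ2, Finset.sum_const, nsmul_eq_mul, mul_assoc]
      _ ≤ μ (ball a (R + δ / 2)) := measure_mono hsub
      _ = ENNReal.ofReal ((R + δ / 2) ^ finrank ℝ E) * μ (ball 0 1) :=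
          μ.addHaar_ball_of_pos _ (by linarith)
  have hvol' := (ENNReal.mul_le_mul_iff_left (measure_ball_pos μ (0 : E) one_pos).ne'
    measure_ball_lt_top.ne).1 hvol
  rw [← ENNReal.ofReal_natCast, ← ENNReal.ofReal_mul (Nat.cast_nonneg _),
    ENNReal.ofReal_le_ofReal_iff (by positivity)] at hvol'
  calc (s.card : ℝ) = s.card * (δ / 2) ^ finrank ℝ E / (δ / 2) ^ finrank ℝ E := by field_simp
    _ ≤ (R + δ / 2) ^ finrank ℝ E / (δ / 2) ^ finrank ℝ E := by gcongr
    _ = ((2 * R + δ) / δ) ^ finrank ℝ E := by rw [← div_pow]; congr 1; field_simp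

theorem card_le_mul_of_forall_card_le {S : Finset E} {ρ : ℝ} {N : ℕ} (hρ : 0 < ρ)
    (hS : ∀ x ∈ S, ∀ y ∈ S, dist x y < 8 * ρ)
    (hN : ∀ S' ⊆ S, (∀ x ∈ S', ∀ y ∈ S', dist x y < ρ) → S'.card ≤ N) :
    S.card ≤ 33 ^ finrank ℝ E * N := by
  classical
  rcases S.eq_empty_or_nonempty with rfl | ⟨a, ha⟩
  · simp
  obtain ⟨T, hTS, hsep, hcov⟩ := S.exists_subset_separated_cover (half_pos hρ)
  choose! f hfT hf using hcov
  have hT : (T.card : ℝ) ≤ 33 ^ finrank ℝ E := by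
    convert card_le_of_separated_of_subset_closedBall (a := a) (by positivity) (half_pos hρ)
      (fun t ht => mem_closedBall.2 (hS t (hTS ht) a ha).le) hsep using 2
    field_simp; norm_num
  rw [mul_comm]
  refine (S.card_le_mul_card_image_of_maps_to hfT N fun t _ => hN _ (Finset.filter_subset _ _)
    fun x hx y hy => ?_).trans (Nat.mul_le_mul_left N (by exact_mod_cast hT))
  rw [Finset.mem_filter] at hx hy
  calc dist x y ≤ dist x t + dist y t := dist_triangle_right x y t
    _ < ρ / 2 + ρ / 2 := by
      gcongr
      · exact hx.2 ▸ hf x hx.1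
      · exact hy.2 ▸ hf y hy.1
    _ = ρ := add_halves ρ

theorem card_le_pow_of_ncard_occupiedScales_le (Q : ℕ) (S : Finset E)
    (hS : ∀ x ∈ S, ∀ y ∈ S, dist x y < 2) (hQ : ∀ z ∈ S, (occupiedScales S z).ncard ≤ Q) :
    S.card ≤ (33 ^ finrank ℝ E) ^ Q := by
  induction Q generalizing S with
  | zero =>
    rw [pow_zero]
    by_contra! h
    obtain ⟨i, -, -, hocc⟩ := exists_common_occupiedScale hS h
    obtain ⟨z, hz⟩ : S.Nonempty := Finset.card_pos.1 (by omega)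
    have := (Set.ncard_pos (finite_occupiedScales S z)).2 ⟨i, hocc z hz⟩
    exact absurd (hQ z hz) (by omega)
  | succ Q ih =>
    rcases le_or_gt S.card 1 with h | h
    · exact h.trans (Nat.one_le_pow _ _ (by positivity))
    obtain ⟨i, hi, hdiam, hocc⟩ := exists_common_occupiedScale hS h
    set ρ : ℝ := 2 ^ (-(i : ℤ) - 1)
    have hρ : 0 < ρ := zpow_pos two_pos _
    have hρ2 : ρ < 2 := (zpow_lt_one_of_neg₀ one_lt_two (by omega)).trans one_lt_two
    have h8ρ : (2 : ℝ) ^ ((2 : ℤ) - (i : ℤ)) = 8 * ρ := by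
      rw [show (2 : ℤ) - i = 3 + (-(i : ℤ) - 1) by ring, zpow_add₀ two_ne_zero]; norm_num [ρ]
    rw [pow_succ']
    refine card_le_mul_of_forall_card_le hρ (h8ρ ▸ hdiam) fun S' hS' hS'ρ => ?_
    refine ih S' (fun x hx y hy => (hS'ρ x hx y hy).trans hρ2) fun z hz => ?_
    have hlt : occupiedScales S' z ⊂ occupiedScales S z :=
      Set.ssubset_iff_of_subset (occupiedScales_mono hS' z) |>.2
        ⟨i, hocc z (hS' hz), notMem_occupiedScales_of_forall_dist_lt fun w hw => hS'ρ w hw z hz⟩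
    exact Nat.le_of_lt_succ <|
      (Set.ncard_lt_ncard hlt (finite_occupiedScales S z)).trans_le (hQ z (hS' hz))

end FiniteDimensional

/-- Covering argument bounding the number of singular points: if every point of a
finite set `S ⊆ B_1(0) ⊆ ℝ^m` sees a point of `S` in at most `Q` of the dyadic
annuli `B_{2^{2-i}}(z) \ B_{2^{-i-1}}(z)`, `i ≥ 1`, then `|S| ≤ c(m)^Q` for a
dimensional constant `c(m)`. -/
theorem stmt_14 (m : ℕ) :
    ∃ c : ℝ, 1 ≤ c ∧
      ∀ (Q : ℕ) (S : Finset (EuclideanSpace ℝ (Fin m))),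
        (↑S ⊆ ball (0 : EuclideanSpace ℝ (Fin m)) 1) →
        (∀ z ∈ S,
          Nat.card {i : ℕ | 1 ≤ i ∧ ∃ w ∈ S,
            w ∈ ball z ((2 : ℝ) ^ ((2 : ℤ) - (i : ℤ))) \
              ball z ((2 : ℝ) ^ (-(i : ℤ) - 1))} ≤ Q) →
        (S.card : ℝ) ≤ c ^ Q := by
  refine ⟨33 ^ m, one_le_pow₀ (by norm_num), fun Q S hS hQ => ?_⟩
  have hdiam : ∀ x ∈ S, ∀ y ∈ S, dist x y < 2 := fun x hx y hy =>
    calc dist x y ≤ dist x 0 + dist y 0 := dist_triangle_right x y 0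
      _ < 1 + 1 := add_lt_add (mem_ball.1 (hS hx)) (mem_ball.1 (hS hy))
      _ = 2 := one_add_one_eq_two
  have hcard := card_le_pow_of_ncard_occupiedScales_le Q S hdiam hQ
  rw [finrank_euclideanSpace_fin] at hcard
  exact_mod_cast hcard
end
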